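/- Let A = C(X) be a commutative W*-algebra (X hyperstonean) and f = (f_n) ∈ l₂(A)'. Let Y_f be the meager set where the pointwise limit of the partial sums g_n = Σ_{k≤n} |f_k|² differs from their least upper bound ḡ in C(X). Then J_f = {a ∈ C(X) : f·a ∈ l₂(A)} consists exactly of the functions a ∈ C(X) vanishing on Y_f. -/
import Mathlib


open Filter

/-- The continuous function `x ↦ ‖f x‖²` on `X`, i.e. `|f|²`. -/
noncomputable def cAbsSq {X : Type*} [TopologicalSpace X] (f : C(X, ℂ)) : C(X, ℝ) :=
  ⟨fun x => ‖f x‖ ^ 2, by fun_prop⟩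

/-- Let `A = C(X)` be a commutative W*-algebra (`X` hyperstonean) and
`f = (f_n) ∈ l₂(A)'`, i.e. the partial sums `g_n = Σ_{k<n} |f_k|²` are uniformly bounded.
Let `ḡ` be the least upper bound of the `g_n` in `C(X)` and `Y_f` the (meager) set where
the pointwise limit of the `g_n` differs from `ḡ`.  Then
`J_f = {a ∈ C(X) : f·a ∈ l₂(A)}` consists exactly of the functions vanishing on `Y_f`.
(Here `f·a ∈ l₂(A)` means that the series `Σ |f_k·a|²` is norm convergent.) -/
theorem Jf_eq_vanishing_on_Yf {X : Type*} [TopologicalSpace X]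
    [CompactSpace X] [T2Space X] [ExtremallyDisconnected X]
    (f : ℕ → C(X, ℂ))
    (hbd : ∃ C : ℝ, ∀ (n : ℕ) (x : X), (∑ k ∈ Finset.range n, cAbsSq (f k)) x ≤ C)
    (g : C(X, ℝ))
    (hlub : IsLUB (Set.range fun n => ∑ k ∈ Finset.range n, cAbsSq (f k)) g)
    (hmeagre : IsMeagre {x : X |
      ¬ Tendsto (fun n => (∑ k ∈ Finset.range n, cAbsSq (f k)) x) atTop (nhds (g x))}) :
    {a : C(X, ℂ) | CauchySeq fun n => ∑ k ∈ Finset.range n, cAbsSq (f k * a)}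
      = {a : C(X, ℂ) | ∀ x : X,
          ¬ Tendsto (fun n => (∑ k ∈ Finset.range n, cAbsSq (f k)) x) atTop (nhds (g x)) →
          a x = 0} := by
  classical
  set G : ℕ → C(X, ℝ) := fun n => ∑ k ∈ Finset.range n, cAbsSq (f k) with hGdef
  -- pointwise formula for G
  have hGx : ∀ n x, G n x = ∑ k ∈ Finset.range n, ‖f k x‖ ^ 2 := by
    intro n x
    simp [hGdef, cAbsSq]
  -- pointwise monotone
  have hmono : ∀ x : X, Monotone fun n => G n x := by
    intro x
    apply monotone_nat_of_le_succ
    intro n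
    simp only [hGx, Finset.sum_range_succ]
    exact le_add_of_nonneg_right (by positivity)
  -- G n ≤ g pointwise
  have hGle : ∀ n x, G n x ≤ g x := by
    intro n x
    exact (hlub.1 ⟨n, rfl⟩ : G n ≤ g) x
  have hbdd : ∀ x : X, BddAbove (Set.range fun n => G n x) := by
    intro x
    exact ⟨g x, by rintro _ ⟨n, rfl⟩; exact hGle n x⟩
  have hconv : ∀ x : X, Tendsto (fun n => G n x) atTop (nhds (⨆ n, G n x)) := fun x =>
    tendsto_atTop_ciSup (hmono x) (hbdd x)
  -- dense set where convergence to g holds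
  have hdense : Dense {x : X | Tendsto (fun n => G n x) atTop (nhds (g x))} := by
    have h1 : {x : X | ¬ Tendsto (fun n => G n x) atTop (nhds (g x))}ᶜ ∈ residual X :=
      hmeagre
    have h2 : {x : X | ¬ Tendsto (fun n => G n x) atTop (nhds (g x))}ᶜ
        = {x : X | Tendsto (fun n => G n x) atTop (nhds (g x))} := by
      ext x; simp
    rw [h2] at h1
    exact dense_of_mem_residual h1
  ext a
  simp only [Set.mem_setOf_eq]
  set b : C(X, ℝ) := cAbsSq a with hbdef
  have hb : ∀ x, b x = ‖a x‖ ^ 2 := fun x => rfl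
  have hb0 : ∀ x, 0 ≤ b x := fun x => by rw [hb]; positivity
  have hprod : ∀ n, (∑ k ∈ Finset.range n, cAbsSq (f k * a)) = G n * b := by
    intro n
    ext x
    simp [hGdef, hbdef, cAbsSq, Finset.sum_mul, norm_mul, mul_pow]
  constructor
  · -- forward direction
    intro hc x hx
    simp only [hprod] at hc
    obtain ⟨h, hh⟩ := cauchySeq_tendsto_of_complete hc
    have hu := ContinuousMap.tendsto_iff_tendstoUniformly.mp hh
    have hpt : ∀ y, Tendsto (fun n => G n y * b y) atTop (nhds (h y)) := by
      intro y
      have := hu.tendsto_at y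
      simpa using this
    have heq : (h : X → ℝ) = fun y => g y * b y := by
      apply Continuous.ext_on hdense h.continuous (by fun_prop)
      intro y hy
      exact tendsto_nhds_unique (hpt y) (hy.mul_const (b y))
    by_contra h0
    have hbne : b x ≠ 0 := by
      rw [hb]
      exact pow_ne_zero _ (norm_ne_zero_iff.2 h0)
    have h1 : Tendsto (fun n => G n x * b x) atTop (nhds ((⨆ n, G n x) * b x)) :=
      (hconv x).mul_const _
    have h2 : Tendsto (fun n => G n x * b x) atTop (nhds (g x * b x)) := by
      have := hpt x
      rwa [show h x = g x * b x from congrFun heq x] at this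
    have hkey : (⨆ n, G n x) = g x :=
      mul_right_cancel₀ hbne (tendsto_nhds_unique h1 h2)
    exact hx (hkey ▸ hconv x)
  · -- backward direction
    intro hv
    suffices hT : Tendsto (fun n => G n * b) atTop (nhds (g * b)) by
      have := hT.cauchySeq
      simpa only [hprod] using this
    rw [ContinuousMap.tendsto_iff_tendstoUniformly]
    -- pointwise convergence
    have hptw : ∀ x : X, Tendsto (fun n => G n x * b x) atTop (nhds (g x * b x)) := by
      intro x
      by_cases hx : Tendsto (fun n => G n x) atTop (nhds (g x))
      · exact hx.mul_const _
      · have hax := hv x hx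
        have : b x = 0 := by rw [hb, hax]; simp
        simp [this]
    have hle : ∀ n x, G n x * b x ≤ g x * b x := fun n x =>
      mul_le_mul_of_nonneg_right (hGle n x) (hb0 x)
    -- Dini-type argument
    rw [Metric.tendstoUniformly_iff]
    intro ε hε
    set U : ℕ → Set X := fun n => {x | g x * b x - G n x * b x < ε} with hUdef
    have hUopen : ∀ n, IsOpen (U n) := by
      intro n
      have : Continuous fun x => g x * b x - G n x * b x := by fun_prop
      exact isOpen_lt this continuous_const
    have hUmono : Monotone U := by
      intro m n hmn x hxm
      have : G m x * b x ≤ G n x * b x :=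
        mul_le_mul_of_nonneg_right (hmono x hmn) (hb0 x)
      simp only [hUdef, Set.mem_setOf_eq] at hxm ⊢
      linarith
    have hcover : (Set.univ : Set X) ⊆ ⋃ n, U n := by
      intro x _
      have hev : ∀ᶠ n in atTop, G n x * b x ∈ Metric.ball (g x * b x) ε :=
        (hptw x) (Metric.ball_mem_nhds _ hε)
      obtain ⟨n, hn⟩ := hev.exists
      refine Set.mem_iUnion.2 ⟨n, ?_⟩
      have hdist : |G n x * b x - g x * b x| < ε := by
        simpa [Real.dist_eq] using hn
      have := abs_lt.1 hdist
      simp only [hUdef, Set.mem_setOf_eq]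
      linarith [this.1]
    obtain ⟨t, ht⟩ := isCompact_univ.elim_finite_subcover U hUopen hcover
    set N := t.sup id with hN
    filter_upwards [eventually_ge_atTop N] with n hn x
    have hxU : x ∈ U n := by
      obtain ⟨i, hi, hxi⟩ := Set.mem_iUnion₂.1 (ht (Set.mem_univ x))
      exact hUmono (le_trans (Finset.le_sup (f := id) hi) hn) hxi
    have hsub : g x * b x - G n x * b x < ε := hxU
    have hnonneg : 0 ≤ g x * b x - G n x * b x := sub_nonneg.2 (hle n x)
    have : dist ((g * b) x) ((G n * b) x) = g x * b x - G n x * b x := by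
      simp only [ContinuousMap.mul_apply]
      rw [Real.dist_eq, abs_of_nonneg hnonneg]
    rw [this]
    exact hsub
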